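/- arXiv:1811.01101 — 3 statements merged into one kernel-verified Lean document; each statement's English description precedes it below -/
import Mathlib

section
/- Let U_1 be uniform on the unit circle S¹ ⊂ ℝ² (identified with ℂ), and let Θ_2, Θ_3, ... be iid uniform on [-α, α] with α ∈ (0, π], independent of U_1. Define U_j = exp(iΘ_j)·U_{j-1} for j ≥ 2. Then for all j, k ≥ 1, the covariance matrix of U_j and U_{j+k} (as random vectors in ℝ²) equals (1/2)·(sinc α)^k · Id₂. -/
open MeasureTheory ProbabilityTheory Set Finset

/-- The uniform probability distribution on a set of positive finite volume. -/
noncomputable def unifOn (s : Set ℝ) : Measure ℝ :=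
  (volume s)⁻¹ • volume.restrict s

/-- The circle-valued random walk: `U j = exp(i(Θ_0 + Θ_1 + ⋯ + Θ_{j-1}))`, so that
`U 1 = exp(iΘ_0)` is uniform on the circle when `Θ_0` is uniform on `[0, 2π)`, and
`U j = exp(iΘ_{j-1}) · U_{j-1}` for `j ≥ 2`. -/
noncomputable def walkU (Θ : ℕ → Ω → ℝ) (j : ℕ) (ω : Ω) : ℂ :=
  Complex.exp (Complex.I * (∑ i ∈ Finset.range j, Θ i ω))

/-- The `(a,b)` entry of the covariance matrix of two centered `ℝ²`-valued (identified
with `ℂ`-valued) random vectors: `E[X_a Y_b]` where index `0` is the real part and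
index `1` the imaginary part. -/
noncomputable def covEntry {Ω : Type*} [MeasureSpace Ω] (P : Measure Ω)
    (X Y : Ω → ℂ) (a b : Fin 2) : ℝ :=
  ∫ ω, (if a = 0 then (X ω).re else (X ω).im) * (if b = 0 then (Y ω).re else (Y ω).im) ∂P

/-!
Write `U_j = exp(iS)` and `U_{j+k} = exp(i(S + T))` with `S = Θ_0 + ⋯ + Θ_{j-1}` and
`T = Θ_j + ⋯ + Θ_{j+k-1}`. For complex `x, y` each product `Re x Re y, Re x Im y, Im x Re y,
Im x Im y` is the real or imaginary part of `(conj x y ± x y) / 2`, so the covariance matrix is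
determined by `E[conj U_j U_{j+k}] = E[exp(iT)]` and `E[U_j U_{j+k}] = E[exp(i(2S + T))]`.
By independence both factor into characteristic functions of the angles: the first is
`(sinc α)^k`, and the second vanishes because it contains the factor `E[exp(2iΘ_0)] = 0`.
-/

open Complex ComplexConjugate

lemma integral_unifOn_Icc {E : Type*} [NormedAddCommGroup E] [NormedSpace ℝ E]
    {a b : ℝ} (hab : a ≤ b) (f : ℝ → E) :
    ∫ x, f x ∂unifOn (Icc a b) = (b - a)⁻¹ • ∫ x in a..b, f x := by
  rw [unifOn, integral_smul_measure, Real.volume_Icc, ENNReal.toReal_inv,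
    ENNReal.toReal_ofReal (sub_nonneg.2 hab), integral_Icc_eq_integral_Ioc,
    ← intervalIntegral.integral_of_le hab]

lemma integral_unifOn_Ico {E : Type*} [NormedAddCommGroup E] [NormedSpace ℝ E]
    {a b : ℝ} (hab : a ≤ b) (f : ℝ → E) :
    ∫ x, f x ∂unifOn (Ico a b) = (b - a)⁻¹ • ∫ x in a..b, f x := by
  rw [unifOn, integral_smul_measure, Real.volume_Ico, ENNReal.toReal_inv,
    ENNReal.toReal_ofReal (sub_nonneg.2 hab), integral_Ico_eq_integral_Ioo,
    ← integral_Ioc_eq_integral_Ioo, ← intervalIntegral.integral_of_le hab]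

lemma charFun_unifOn_Icc_neg_self {α t : ℝ} (hα : 0 < α) (ht : t ≠ 0) :
    charFun (unifOn (Icc (-α) α)) t = ↑(Real.sin (t * α) / (t * α)) := by
  have htI : (t : ℂ) * I ≠ 0 := mul_ne_zero (ofReal_ne_zero.2 ht) I_ne_zero
  rw [charFun_apply_real, integral_unifOn_Icc (by linarith)]
  simp_rw [mul_right_comm _ _ I]
  rw [integral_exp_mul_complex htI]
  have hexp : exp (t * I * α) - exp (t * I * ↑(-α)) = 2 * sin (t * α) * I := by
    rw [two_sin, mul_assoc _ I I, I_mul_I, ofReal_neg]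
    ring_nf
  rw [hexp, real_smul]
  push_cast
  field_simp
  ring

lemma charFun_unifOn_Ico_zero_two_pi {n : ℤ} (hn : n ≠ 0) :
    charFun (unifOn (Ico 0 (2 * Real.pi))) n = 0 := by
  have hnI : ((n : ℝ) : ℂ) * I ≠ 0 := mul_ne_zero (by exact_mod_cast hn) I_ne_zero
  rw [charFun_apply_real, integral_unifOn_Ico Real.two_pi_pos.le]
  simp_rw [mul_right_comm _ _ I]
  rw [integral_exp_mul_complex hnI]
  push_cast
  rw [show (n : ℂ) * I * (2 * Real.pi) = n * (2 * Real.pi * I) by ring, exp_int_mul_two_pi_mul_I]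
  simp

lemma ProbabilityTheory.iIndepFun.integral_exp_sum_mul_I {Ω ι : Type*} [MeasurableSpace Ω]
    {P : Measure Ω} {Θ : ι → Ω → ℝ} (hΘ : iIndepFun Θ P) (hm : ∀ i, Measurable (Θ i))
    (s : Finset ι) (c : ι → ℝ) :
    ∫ ω, exp ((∑ i ∈ s, c i * Θ i ω : ℝ) * I) ∂P =
      ∏ i ∈ s, charFun (P.map (Θ i)) (c i) := by
  have hcΘ : iIndepFun (fun i ω => c i * Θ i ω) P :=
    hΘ.comp (fun i x => c i * x) fun i => measurable_const_mul (c i)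
  have hsum := (iIndepFun_iff_finset.1 hcΘ s).charFun_map_fun_finsetSum_eq_prod
    (fun i _ => ((hm i).const_mul (c i)).aemeasurable)
  have h1 := congrFun hsum 1
  rw [charFun_apply_real, integral_map (by fun_prop) (by fun_prop)] at h1
  simpa [charFun_map_mul_comp (hm _).aemeasurable] using h1

lemma covEntry_matrix_eq_smul_one {Ω : Type*} [MeasureSpace Ω] {P : Measure Ω} {X Y : Ω → ℂ}
    (hconj : Integrable (fun ω => conj (X ω) * Y ω) P)
    (hmul : Integrable (fun ω => X ω * Y ω) P)
    {r : ℝ} (hr : ∫ ω, conj (X ω) * Y ω ∂P = r) (hzero : ∫ ω, X ω * Y ω ∂P = 0) :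
    Matrix.of (covEntry P X Y) = (r / 2) • (1 : Matrix (Fin 2) (Fin 2) ℝ) := by
  have key (L : ℂ →L[ℝ] ℝ) (u v : ℂ) {f : ℂ → ℂ → ℝ}
      (hf : ∀ x y, f x y = L (u * (conj x * y) + v * (x * y))) :
      ∫ ω, f (X ω) (Y ω) ∂P = L (u * r) := by
    have hint := (hconj.const_mul u).add (hmul.const_mul v)
    simp_rw [hf]
    refine (L.integral_comp_comm hint).trans (congrArg L ?_)
    simp only [Pi.add_apply]
    rw [integral_add (hconj.const_mul u) (hmul.const_mul v), integral_const_mul,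
      integral_const_mul, hr, hzero, mul_zero, add_zero]
  ext a b
  fin_cases a <;> fin_cases b
  · simpa [covEntry, div_eq_inv_mul] using key reCLM (1 / 2) (1 / 2) (f := fun x y => x.re * y.re)
      fun x y => by simp; ring
  · simpa [covEntry] using key imCLM (1 / 2) (1 / 2) (f := fun x y => x.re * y.im)
      fun x y => by simp; ring
  · simpa [covEntry] using key imCLM (-1 / 2) (1 / 2) (f := fun x y => x.im * y.re)
      fun x y => by simp; ring
  · simpa [covEntry, div_eq_inv_mul] using key reCLM (1 / 2) (-1 / 2) (f := fun x y => x.im * y.im)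
      fun x y => by simp; ring

lemma integrable_exp_mul_I {Ω : Type*} [MeasurableSpace Ω] {P : Measure Ω} [IsFiniteMeasure P]
    {f : Ω → ℝ} (hf : Measurable f) : Integrable (fun ω => exp (f ω * I)) P :=
  (integrable_const (1 : ℝ)).mono' (by fun_prop)
    (ae_of_all _ fun ω => (norm_exp_ofReal_mul_I (f ω)).le)

section walkU

variable {Ω : Type*} (Θ : ℕ → Ω → ℝ) (j k : ℕ) (ω : Ω)

lemma walkU_eq_exp_mul_I : walkU Θ j ω = exp ((∑ i ∈ range j, Θ i ω : ℝ) * I) := by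
  rw [walkU, mul_comm, ofReal_sum]

lemma conj_walkU_mul_walkU_add :
    conj (walkU Θ j ω) * walkU Θ (j + k) ω =
      exp ((∑ i ∈ Ico j (j + k), Θ i ω : ℝ) * I) := by
  rw [walkU_eq_exp_mul_I, walkU_eq_exp_mul_I, ← exp_conj, ← exp_add, ← sum_range_add_sum_Ico _
    (Nat.le_add_right j k)]
  simp only [map_mul, conj_ofReal, conj_I]
  push_cast
  ring_nf

lemma walkU_mul_walkU_add :
    walkU Θ j ω * walkU Θ (j + k) ω =
      exp ((∑ i ∈ range (j + k), (if i < j then 2 else 1) * Θ i ω : ℝ) * I) := by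
  have hsplit : ∑ i ∈ range (j + k), (if i < j then 2 else 1) * Θ i ω =
      2 * ∑ i ∈ range j, Θ i ω + ∑ i ∈ Ico j (j + k), Θ i ω := by
    rw [← sum_range_add_sum_Ico _ (Nat.le_add_right j k), mul_sum]
    congr 1 <;> refine sum_congr rfl fun i hi => ?_
    · simp [mem_range.1 hi]
    · simp [(mem_Ico.1 hi).1]
  rw [walkU_eq_exp_mul_I, walkU_eq_exp_mul_I, ← exp_add, hsplit,
    ← sum_range_add_sum_Ico _ (Nat.le_add_right j k)]
  push_cast
  ring_nf

end walkU

theorem stmt_1_general {Ω : Type*} [MeasureSpace Ω] (P : Measure Ω) [IsProbabilityMeasure P]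
    (α : ℝ) (hα : 0 < α)
    (Θ : ℕ → Ω → ℝ) (hmeas : ∀ i, Measurable (Θ i))
    (hindep : iIndepFun Θ P)
    (h0 : Measure.map (Θ 0) P = unifOn (Ico 0 (2 * Real.pi)))
    (hunif : ∀ i ≥ 1, Measure.map (Θ i) P = unifOn (Icc (-α) α))
    (j k : ℕ) (hj : 1 ≤ j) :
    (Matrix.of fun a b => covEntry P (walkU Θ j) (walkU Θ (j + k)) a b) =
      ((1 / 2) * (Real.sin α / α) ^ k) • (1 : Matrix (Fin 2) (Fin 2) ℝ) := by
  have hconj :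
      ∫ ω, conj (walkU Θ j ω) * walkU Θ (j + k) ω ∂P = ↑((Real.sin α / α) ^ k) := by
    have h := hindep.integral_exp_sum_mul_I hmeas (Ico j (j + k)) 1
    simp only [Pi.one_apply, one_mul] at h
    simp_rw [conj_walkU_mul_walkU_add, h]
    rw [prod_congr rfl fun i hi => by
      rw [hunif i (hj.trans (mem_Ico.1 hi).1), charFun_unifOn_Icc_neg_self hα one_ne_zero]]
    simp [div_pow]
  have hmul : ∫ ω, walkU Θ j ω * walkU Θ (j + k) ω ∂P = 0 := by
    simp_rw [walkU_mul_walkU_add, hindep.integral_exp_sum_mul_I hmeas]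
    refine prod_eq_zero (mem_range.2 (by omega : 0 < j + k)) ?_
    simpa [h0, show 0 < j from hj] using charFun_unifOn_Ico_zero_two_pi (n := 2) two_ne_zero
  have hconj_int : Integrable (fun ω => conj (walkU Θ j ω) * walkU Θ (j + k) ω) P := by
    simp_rw [conj_walkU_mul_walkU_add]
    exact integrable_exp_mul_I (by fun_prop)
  have hmul_int : Integrable (fun ω => walkU Θ j ω * walkU Θ (j + k) ω) P := by
    simp_rw [walkU_mul_walkU_add]
    exact integrable_exp_mul_I (by fun_prop)
  rw [covEntry_matrix_eq_smul_one hconj_int hmul_int hconj hmul]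
  ring_nf

/-- For the circle random walk driven by iid angles uniform on `[-α, α]`, `α ∈ (0, π]`,
the covariance matrix of `U_j` and `U_{j+k}` equals `(1/2)·(sinc α)^k · Id₂`. -/
theorem stmt_1 {Ω : Type*} [MeasureSpace Ω] (P : Measure Ω) [IsProbabilityMeasure P]
    (α : ℝ) (hα : 0 < α) (hαπ : α ≤ Real.pi)
    (Θ : ℕ → Ω → ℝ) (hmeas : ∀ i, Measurable (Θ i))
    (hindep : iIndepFun Θ P)
    (h0 : Measure.map (Θ 0) P = unifOn (Ico 0 (2 * Real.pi)))
    (hunif : ∀ i ≥ 1, Measure.map (Θ i) P = unifOn (Icc (-α) α))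
    (j k : ℕ) (hj : 1 ≤ j) (hk : 1 ≤ k) :
    (Matrix.of fun a b => covEntry P (walkU Θ j) (walkU Θ (j + k)) a b) =
      ((1 / 2) * (Real.sin α / α) ^ k) • (1 : Matrix (Fin 2) (Fin 2) ℝ) :=
  stmt_1_general P α hα Θ hmeas hindep h0 hunif j k hj
end

section
/- Let x : [0,1] → ℝ be L-Lipschitz. Define f_n(x) ∈ C([0,1], ℂ) by f_n(x)(t) = (1/n)[Σ_{k=1}^{⌊nt⌋} e^{i x(k/n)} + (nt - ⌊nt⌋) e^{i x((⌊nt⌋+1)/n)}] and f(x)(t) = ∫_0^t e^{i x(s)} ds. Then ‖f_n(x) - f(x)‖_∞ ≤ L/n. -/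
/-!
On each grid cell `[(k-1)/n, k/n]` the Riemann sum replaces `e^{i x(s)}` by its value at the right
endpoint; since `θ ↦ e^{iθ}` is `1`-Lipschitz, the integrand changes by at most `L/n` there, and
the same holds on the final partial cell `[⌊nt⌋/n, t]`, whose sample point `(⌊nt⌋+1)/n` is also
within `1/n`. Summing these errors gives `L t / n ≤ L / n`.
-/

open Finset intervalIntegral

noncomputable def fnMap (n : ℕ) (x : ℝ → ℝ) (t : ℝ) : ℂ :=
  (1 / (n : ℂ)) * (∑ k ∈ Finset.Icc 1 ⌊(n : ℝ) * t⌋₊, Complex.exp (Complex.I * x (k / n)) +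
    (((n : ℝ) * t - ⌊(n : ℝ) * t⌋₊ : ℝ) : ℂ) *
      Complex.exp (Complex.I * x ((⌊(n : ℝ) * t⌋₊ + 1 : ℕ) / n)))

noncomputable def fMap (x : ℝ → ℝ) (t : ℝ) : ℂ :=
  ∫ s in (0 : ℝ)..t, Complex.exp (Complex.I * x s)

open Set

theorem Complex.lipschitzWith_exp_I_mul_ofReal :
    LipschitzWith 1 fun θ : ℝ => Complex.exp (Complex.I * θ) := by
  refine LipschitzWith.of_dist_le_mul fun a b => ?_
  have hfactor : Complex.exp (Complex.I * a) - Complex.exp (Complex.I * b) =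
      Complex.exp (Complex.I * b) * (Complex.exp (Complex.I * ↑(a - b)) - 1) := by
    push_cast
    rw [mul_sub, ← Complex.exp_add]
    ring_nf
  rw [dist_eq_norm, hfactor, norm_mul, Complex.norm_exp_I_mul_ofReal, one_mul, NNReal.coe_one,
    one_mul, Real.dist_eq]
  exact Real.norm_exp_I_mul_ofReal_sub_one_le

section

variable {E : Type*} [NormedAddCommGroup E] [NormedSpace ℝ E] [CompleteSpace E]

theorem norm_smul_sub_integral_le_of_norm_sub_le {g : ℝ → E} {a b C : ℝ} {v : E} (hab : a ≤ b)
    (hg : IntervalIntegrable g MeasureTheory.volume a b) (hv : ∀ s ∈ Ioc a b, ‖v - g s‖ ≤ C) :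
    ‖(b - a) • v - ∫ s in a..b, g s‖ ≤ C * (b - a) := by
  rw [← integral_const, ← integral_sub intervalIntegrable_const hg,
    ← abs_of_nonneg (sub_nonneg.2 hab)]
  exact norm_integral_le_of_norm_le_const fun s hs => hv s (uIoc_of_le hab ▸ hs)

theorem LipschitzOnWith.norm_smul_sub_integral_le {g : ℝ → E} {K : NNReal} {a b c : ℝ}
    (hg : LipschitzOnWith K g (Icc a c)) (hab : a ≤ b) (hbc : b ≤ c) :
    ‖(b - a) • g c - ∫ s in a..b, g s‖ ≤ K * (c - a) * (b - a) := by
  have hsub : Icc a b ⊆ Icc a c := Icc_subset_Icc_right hbc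
  refine norm_smul_sub_integral_le_of_norm_sub_le hab
    ((hg.continuousOn.mono hsub).intervalIntegrable_of_Icc hab) fun s hs => ?_
  calc ‖g c - g s‖ ≤ K * ‖c - s‖ :=
        hg.norm_sub_le ⟨hab.trans hbc, le_rfl⟩ (hsub (Ioc_subset_Icc_self hs))
    _ ≤ K * (c - a) := by
        gcongr
        rw [Real.norm_of_nonneg (by linarith [hs.2])]
        linarith [hs.1]

theorem LipschitzOnWith.norm_sum_smul_sub_integral_le {g : ℝ → E} {K : NNReal} {n m : ℕ}
    (hg : LipschitzOnWith K g (Icc 0 (m / n))) :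
    ‖∑ k ∈ range m, (n : ℝ)⁻¹ • g ((k + 1) / n) - ∫ s in (0 : ℝ)..m / n, g s‖ ≤
      K / n * (m / n) := by
  have hstep : ∀ k : ℕ, ((k + 1 : ℕ) : ℝ) / n - k / n = (n : ℝ)⁻¹ := fun k => by
    push_cast; ring
  have hmono : ∀ k : ℕ, (k : ℝ) / n ≤ ((k + 1 : ℕ) : ℝ) / n := fun k => by
    linarith [hstep k, inv_nonneg.2 (n.cast_nonneg : (0 : ℝ) ≤ n)]
  have hpiece : ∀ k ∈ range m, LipschitzOnWith K g (Icc ((k : ℝ) / n) (((k + 1 : ℕ) : ℝ) / n)) :=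
    fun k hk => hg.mono <| Icc_subset_Icc (by positivity) <|
      div_le_div_of_nonneg_right (by exact_mod_cast mem_range.1 hk) n.cast_nonneg
  have hsplit : ∫ s in (0 : ℝ)..m / n, g s =
      ∑ k ∈ range m, ∫ s in (k : ℝ) / n..((k + 1 : ℕ) : ℝ) / n, g s := by
    rw [sum_integral_adjacent_intervals (a := fun k : ℕ => (k : ℝ) / n) fun k hk =>
      ((hpiece k (mem_range.2 hk)).continuousOn.intervalIntegrable_of_Icc (hmono k))]
    simp
  calc _ = ‖∑ k ∈ range m, ((((k + 1 : ℕ) : ℝ) / n - k / n) • g (((k + 1 : ℕ) : ℝ) / n) -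
          ∫ s in (k : ℝ) / n..((k + 1 : ℕ) : ℝ) / n, g s)‖ := by
        simp only [hsplit, hstep, sum_sub_distrib]
        push_cast
        rfl
    _ ≤ ∑ k ∈ range m, K * (n : ℝ)⁻¹ * (n : ℝ)⁻¹ := by
        refine (norm_sum_le _ _).trans (sum_le_sum fun k hk => ?_)
        simpa only [hstep] using (hpiece k hk).norm_smul_sub_integral_le (hmono k) le_rfl
    _ = K / n * (m / n) := by
        rw [sum_const, card_range, nsmul_eq_mul]
        ring

noncomputable def interpRiemannSum (g : ℝ → E) (n : ℕ) (t : ℝ) : E :=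
  ∑ k ∈ range ⌊n * t⌋₊, (n : ℝ)⁻¹ • g ((k + 1) / n) +
    (t - ⌊n * t⌋₊ / n) • g ((⌊n * t⌋₊ + 1) / n)

theorem LipschitzOnWith.norm_interpRiemannSum_sub_integral_le {g : ℝ → E} {K : NNReal}
    (hg : LipschitzOnWith K g (Icc 0 1)) {n : ℕ} (hn : 0 < n) {t : ℝ} (ht : t ∈ Set.Icc 0 1) :
    ‖interpRiemannSum g n t - ∫ s in (0 : ℝ)..t, g s‖ ≤ K / n * t := by
  have hn' : (0 : ℝ) < n := by exact_mod_cast hn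
  set m := ⌊n * t⌋₊
  have hm_le : (m : ℝ) / n ≤ t := by
    rw [div_le_iff₀' hn']; exact Nat.floor_le (by have := ht.1; positivity)
  have hlt_m : t < (m + 1) / n := by rw [lt_div_iff₀' hn']; exact Nat.lt_floor_add_one _
  have hgrid := (hg.mono (Icc_subset_Icc_right (hm_le.trans ht.2))).norm_sum_smul_sub_integral_le
  have hlast : ‖(t - m / n) • g ((m + 1) / n) - ∫ s in (m : ℝ) / n..t, g s‖ ≤
      K / n * (t - m / n) := by
    rcases hm_le.eq_or_lt with heq | hlt
    · rw [← heq]; simp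
    -- here `m < n`, so the sample point `(m + 1) / n` still lies in `[0, 1]`
    have hm1 : ((m : ℝ) + 1) / n ≤ 1 := by
      have : m < n := by exact_mod_cast (div_lt_one hn').1 (hlt.trans_le ht.2)
      rw [div_le_one hn']; exact_mod_cast this
    have := (hg.mono (Icc_subset_Icc (by positivity) hm1)).norm_smul_sub_integral_le hlt.le
      hlt_m.le
    rwa [show ((m : ℝ) + 1) / n - m / n = (n : ℝ)⁻¹ by ring, ← div_eq_mul_inv] at this
  have hint : ∀ a b : ℝ, 0 ≤ a → a ≤ b → b ≤ 1 → IntervalIntegrable g MeasureTheory.volume a b :=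
    fun a b ha hab hb => (hg.continuousOn.mono (Icc_subset_Icc ha hb)).intervalIntegrable_of_Icc hab
  rw [interpRiemannSum, ← integral_add_adjacent_intervals (b := (m : ℝ) / n)
    (hint _ _ le_rfl (by positivity) (hm_le.trans ht.2)) (hint _ _ (by positivity) hm_le ht.2)]
  calc _ = ‖(∑ k ∈ range m, (n : ℝ)⁻¹ • g ((k + 1) / n) - ∫ s in (0 : ℝ)..m / n, g s) +
        ((t - m / n) • g ((m + 1) / n) - ∫ s in (m : ℝ) / n..t, g s)‖ := by
        congr 1; abel
    _ ≤ K / n * (m / n) + K / n * (t - m / n) := (norm_add_le _ _).trans (add_le_add hgrid hlast)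
    _ = K / n * t := by ring

end

theorem fnMap_eq_interpRiemannSum (x : ℝ → ℝ) {n : ℕ} (hn : n ≠ 0) (t : ℝ) :
    fnMap n x t = interpRiemannSum (fun s => Complex.exp (Complex.I * x s)) n t := by
  have hnC : (n : ℂ) ≠ 0 := Nat.cast_ne_zero.2 hn
  rw [fnMap, interpRiemannSum, ← Finset.Ico_add_one_right_eq_Icc, sum_Ico_eq_sum_range, mul_add,
    mul_sum]
  congr 1
  · refine sum_congr rfl fun k _ => ?_
    rw [Complex.real_smul]
    push_cast
    ring_nf
  · rw [Complex.real_smul]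
    push_cast
    field_simp

/-- If `x : [0,1] → ℝ` is `L`-Lipschitz, then `‖f_n(x) - f(x)‖_∞ ≤ L/n`. -/
theorem stmt_9 (x : ℝ → ℝ) (L : ℝ) (hL : 0 ≤ L)
    (hx : ∀ s ∈ Set.Icc (0 : ℝ) 1, ∀ u ∈ Set.Icc (0 : ℝ) 1, |x s - x u| ≤ L * |s - u|)
    (n : ℕ) (hn : 1 ≤ n) :
    ∀ t ∈ Set.Icc (0 : ℝ) 1, ‖fnMap n x t - fMap x t‖ ≤ L / n := by
  intro t ht
  have hxL : LipschitzOnWith L.toNNReal x (Icc 0 1) :=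
    LipschitzOnWith.of_dist_le_mul fun s hs u hu => by
      simpa [Real.dist_eq, Real.coe_toNNReal L hL] using hx s hs u hu
  have hexp : LipschitzOnWith (1 * L.toNNReal) (fun s => Complex.exp (Complex.I * x s)) (Icc 0 1) :=
    Complex.lipschitzWith_exp_I_mul_ofReal.comp_lipschitzOnWith hxL
  rw [fnMap_eq_interpRiemannSum x (by omega), fMap]
  calc _ ≤ L / n * t := by
        simpa [Real.coe_toNNReal L hL] using hexp.norm_interpRiemannSum_sub_integral_le hn ht
    _ ≤ L / n * 1 := by gcongr; exact ht.2
    _ = L / n := mul_one _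
end

section
/- Let (α_n) be a sequence in (0, π] with α_n → 0 and n·α_n² → ∞. For each n, let U_{1,n} be uniform on S¹ and U_{j,n} = exp(iΘ_{j,n})U_{j-1,n} with Θ_{j,n} iid uniform on [-α_n, α_n]. Then for each fixed t ∈ [0,1], E[‖(1/n)X^n_t‖²] → 0, where X^n_t = Σ_{j=1}^{⌊nt⌋} U_{j,n} + (nt - ⌊nt⌋)U_{⌊nt⌋+1,n}. -/
open MeasureTheory ProbabilityTheory Set Finset Filter

/-- The linearly interpolated path
`X^n_t = Σ_{j=1}^{⌊nt⌋} U_j + (nt - ⌊nt⌋) U_{⌊nt⌋+1}` built from the walk. -/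
noncomputable def interpX (Θ : ℕ → Ω → ℝ) (n : ℕ) (t : ℝ) (ω : Ω) : ℂ :=
  ∑ j ∈ Finset.Icc 1 ⌊(n : ℝ) * t⌋₊, walkU Θ j ω +
    (((n : ℝ) * t - ⌊(n : ℝ) * t⌋₊ : ℝ) : ℂ) * walkU Θ (⌊(n : ℝ) * t⌋₊ + 1) ω

/-!
Write `U_j = exp(i S_j)` with `S_j = Θ_0 + ⋯ + Θ_{j-1}` and `c = sin α / α`, the characteristic
function of the uniform law on `[-α, α]` at `1`. For `j, k ≥ 1` the difference `S_j - S_k` is a sum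
of `|j - k|` independent uniform angles, so `E[Re(U_j conj U_k)] = c ^ |j - k|`, whence
`E‖U_1 + ⋯ + U_m‖² = ∑_{j,k ≤ m} c ^ |j - k| ≤ 2m / (1 - c)`. The interpolation term has modulus at
most `1`, so `E‖X^n_t / n‖² ≤ 6 / (n (1 - c))`. Finally, integrating `cos θ ≤ 1 - 2θ²/π²` over
`[0, α]` gives `1 - c ≥ 2α² / (3π²)` on `(0, π]`, so `n (1 - c) → ∞` as soon as `n α² → ∞`.
-/

open Real in
theorem sin_le_sub_mul_cube {x : ℝ} (hx₀ : 0 ≤ x) (hxπ : x ≤ π) :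
    sin x ≤ x - 2 / (3 * π ^ 2) * x ^ 3 := by
  have hq : IntervalIntegrable (fun y : ℝ => 2 / π ^ 2 * y ^ 2) volume 0 x :=
    (by fun_prop : Continuous _).intervalIntegrable _ _
  calc sin x = ∫ y in (0 : ℝ)..x, cos y := by rw [integral_cos, sin_zero, sub_zero]
    _ ≤ ∫ y in (0 : ℝ)..x, (1 - 2 / π ^ 2 * y ^ 2) :=
      intervalIntegral.integral_mono_on hx₀ (continuous_cos.intervalIntegrable _ _)
        (intervalIntegrable_const.sub hq) fun y hy =>
          cos_le_one_sub_mul_cos_sq (abs_le.2 ⟨by linarith [hy.1, pi_pos], hy.2.trans hxπ⟩)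
    _ = x - 2 / (3 * π ^ 2) * x ^ 3 := by
      rw [intervalIntegral.integral_sub intervalIntegrable_const hq,
        intervalIntegral.integral_const, intervalIntegral.integral_const_mul, integral_pow]
      simp only [sub_zero, smul_eq_mul, mul_one]
      ring

open Real in
theorem mul_sq_le_one_sub_sin_div_self {x : ℝ} (hx₀ : 0 < x) (hxπ : x ≤ π) :
    2 / (3 * π ^ 2) * x ^ 2 ≤ 1 - sin x / x := by
  rw [le_sub_comm, div_le_iff₀ hx₀]
  linarith [sin_le_sub_mul_cube hx₀.le hxπ]

open Real in
theorem tendsto_mul_one_sub_sin_div_self_atTop {α : ℕ → ℝ} (hα : ∀ n, 0 < α n ∧ α n ≤ π)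
    (hfast : Tendsto (fun n : ℕ => (n : ℝ) * α n ^ 2) atTop atTop) :
    Tendsto (fun n : ℕ => (n : ℝ) * (1 - sin (α n) / α n)) atTop atTop := by
  refine tendsto_atTop_mono (fun n => ?_)
    (hfast.const_mul_atTop (by positivity : 0 < 2 / (3 * π ^ 2)))
  have := mul_sq_le_one_sub_sin_div_self (hα n).1 (hα n).2
  calc 2 / (3 * π ^ 2) * ((n : ℝ) * α n ^ 2) = n * (2 / (3 * π ^ 2) * α n ^ 2) := by ring
    _ ≤ _ := by gcongr

theorem integral_exp_I_mul_unifOn_Icc {a : ℝ} (ha : 0 < a) :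
    ∫ x, Complex.exp (Complex.I * x) ∂unifOn (Icc (-a) a) = ((Real.sin a / a : ℝ) : ℂ) := by
  rw [unifOn, integral_smul_measure, Real.volume_Icc, integral_Icc_eq_integral_Ioc,
    ← intervalIntegral.integral_of_le (by linarith), integral_exp_mul_complex Complex.I_ne_zero,
    ENNReal.toReal_inv, ENNReal.toReal_ofReal (by linarith), Complex.ofReal_div,
    Complex.ofReal_sin, Complex.sin, Complex.real_smul, div_eq_mul_inv _ Complex.I,
    Complex.inv_I]
  push_cast
  field_simp
  ring_nf

theorem sum_pow_le_inv_one_sub_of_injOn {c : ℝ} (hc₀ : 0 ≤ c) (hc₁ : c < 1) {s : Finset ℕ}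
    {f : ℕ → ℕ} (hf : Set.InjOn f s) : ∑ k ∈ s, c ^ f k ≤ (1 - c)⁻¹ := by
  rw [← Finset.sum_image hf, ← tsum_geometric_of_lt_one hc₀ hc₁]
  exact (summable_geometric_of_lt_one hc₀ hc₁).sum_le_tsum _ fun i _ => pow_nonneg hc₀ i

theorem sum_pow_dist_le {c : ℝ} (hc₀ : 0 ≤ c) (hc₁ : c < 1) (j : ℕ) (s : Finset ℕ) :
    ∑ k ∈ s, c ^ Nat.dist j k ≤ 2 * (1 - c)⁻¹ := by
  rw [← Finset.sum_filter_add_sum_filter_not s (· ≤ j), two_mul]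
  gcongr <;> refine sum_pow_le_inv_one_sub_of_injOn hc₀ hc₁ fun k hk l hl hkl => ?_ <;>
    simp only [coe_filter, Set.mem_ofPred_eq, Nat.dist] at hk hl hkl <;> omega

theorem norm_sq_sum_exp_I_mul (s : Finset ℕ) (g : ℕ → ℝ) :
    ‖∑ j ∈ s, Complex.exp (Complex.I * g j)‖ ^ 2 = ∑ j ∈ s, ∑ k ∈ s, Real.cos (g j - g k) := by
  rw [← Complex.ofReal_re (_ ^ 2), Complex.ofReal_pow, ← Complex.mul_conj', map_sum,
    Finset.sum_mul_sum, Complex.re_sum]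
  refine Finset.sum_congr rfl fun j _ => ?_
  rw [Complex.re_sum]
  refine Finset.sum_congr rfl fun k _ => ?_
  rw [← Complex.exp_conj, ← Complex.exp_add, ← Complex.exp_ofReal_mul_I_re]
  congr 2
  simp only [map_mul, Complex.conj_I, Complex.conj_ofReal]
  push_cast
  ring

section Independent

variable {Ω ι : Type*} [MeasurableSpace Ω] {P : Measure Ω} {Θ : ι → Ω → ℝ}

theorem ProbabilityTheory.iIndepFun.integral_exp_I_mul_sum (hΘ : iIndepFun Θ P)
    (hmeas : ∀ i, Measurable (Θ i)) (s : Finset ι) :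
    ∫ ω, Complex.exp (Complex.I * ∑ i ∈ s, Θ i ω) ∂P =
      ∏ i ∈ s, ∫ ω, Complex.exp (Complex.I * Θ i ω) ∂P := by
  have hs : iIndepFun (fun i : s => Θ i) P := hΘ.precomp Subtype.val_injective
  have := hs.integral_fun_prod_comp (f := fun (_ : s) (x : ℝ) => Complex.exp (Complex.I * x))
    (fun i => (hmeas i).aemeasurable) (fun _ => by fun_prop)
  rw [← Finset.prod_coe_sort, ← this]
  congr 1 with ω
  push_cast
  rw [Finset.mul_sum, Complex.exp_sum, ← Finset.prod_coe_sort]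

theorem ProbabilityTheory.iIndepFun.integral_cos_sum (hΘ : iIndepFun Θ P)
    (hmeas : ∀ i, Measurable (Θ i)) {c : ℝ} {s : Finset ι}
    (hc : ∀ i ∈ s, ∫ ω, Complex.exp (Complex.I * Θ i ω) ∂P = c) :
    ∫ ω, Real.cos (∑ i ∈ s, Θ i ω) ∂P = c ^ #s := by
  have := hΘ.isProbabilityMeasure
  have hint : Integrable (fun ω => Complex.exp (Complex.I * ∑ i ∈ s, Θ i ω)) P := by
    refine Integrable.of_bound (by fun_prop) 1 (ae_of_all _ fun ω => ?_)
    rw [mul_comm, Complex.norm_exp_ofReal_mul_I]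
  have hcos (ω : Ω) :
      Real.cos (∑ i ∈ s, Θ i ω) = (Complex.exp (Complex.I * ∑ i ∈ s, Θ i ω)).re := by
    rw [mul_comm, Complex.exp_ofReal_mul_I_re]
  simp_rw [hcos]
  rw [← RCLike.re_eq_complex_re, integral_re hint, hΘ.integral_exp_I_mul_sum hmeas,
    Finset.prod_congr rfl hc, Finset.prod_const, ← Complex.ofReal_pow, RCLike.re_eq_complex_re,
    Complex.ofReal_re]

end Independent

section Walk

variable {Ω : Type*}

theorem norm_walkU (Θ : ℕ → Ω → ℝ) (j : ℕ) (ω : Ω) : ‖walkU Θ j ω‖ = 1 := by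
  rw [walkU, mul_comm, Complex.norm_exp_ofReal_mul_I]

theorem norm_interpX_le (Θ : ℕ → Ω → ℝ) (n : ℕ) {t : ℝ} (ht : 0 ≤ t) (ω : Ω) :
    ‖interpX Θ n t ω‖ ≤ ‖∑ j ∈ Icc 1 ⌊(n : ℝ) * t⌋₊, walkU Θ j ω‖ + 1 := by
  have hnt : 0 ≤ (n : ℝ) * t := by positivity
  have hfrac₀ : 0 ≤ (n : ℝ) * t - ⌊(n : ℝ) * t⌋₊ := sub_nonneg.2 (Nat.floor_le hnt)
  have hfrac₁ : (n : ℝ) * t - ⌊(n : ℝ) * t⌋₊ ≤ 1 := by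
    linarith [Nat.lt_floor_add_one ((n : ℝ) * t)]
  refine (norm_add_le _ _).trans (add_le_add le_rfl ?_)
  rw [norm_mul, norm_walkU, mul_one, Complex.norm_real, Real.norm_of_nonneg hfrac₀]
  exact hfrac₁

variable [MeasurableSpace Ω] {P : Measure Ω} {Θ : ℕ → Ω → ℝ} {c : ℝ}

theorem measurable_walkU (hmeas : ∀ i, Measurable (Θ i)) (j : ℕ) : Measurable (walkU Θ j) := by
  unfold walkU
  fun_prop

theorem integral_cos_sum_range_sub (hΘ : iIndepFun Θ P) (hmeas : ∀ i, Measurable (Θ i))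
    (hc : ∀ i, 1 ≤ i → ∫ ω, Complex.exp (Complex.I * Θ i ω) ∂P = c) {j k : ℕ}
    (hj : 1 ≤ j) (hk : 1 ≤ k) :
    ∫ ω, Real.cos (∑ i ∈ range j, Θ i ω - ∑ i ∈ range k, Θ i ω) ∂P = c ^ Nat.dist j k := by
  wlog hkj : k ≤ j generalizing j k
  · rw [Nat.dist_comm, ← this hk hj (by omega)]
    congr 1 with ω
    rw [← Real.cos_neg, neg_sub]
  simp_rw [← Finset.sum_Ico_eq_sub _ hkj]
  rw [hΘ.integral_cos_sum hmeas fun i hi => hc i (hk.trans (Finset.mem_Ico.1 hi).1),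
    Nat.card_Ico, Nat.dist, Nat.sub_eq_zero_of_le hkj, add_zero]

theorem integral_norm_sq_sum_walkU (hΘ : iIndepFun Θ P) (hmeas : ∀ i, Measurable (Θ i))
    (hc : ∀ i, 1 ≤ i → ∫ ω, Complex.exp (Complex.I * Θ i ω) ∂P = c) {s : Finset ℕ}
    (hs : ∀ j ∈ s, 1 ≤ j) :
    ∫ ω, ‖∑ j ∈ s, walkU Θ j ω‖ ^ 2 ∂P = ∑ j ∈ s, ∑ k ∈ s, c ^ Nat.dist j k := by
  have := hΘ.isProbabilityMeasure
  have hint (j k : ℕ) : Integrable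
      (fun ω => Real.cos (∑ i ∈ range j, Θ i ω - ∑ i ∈ range k, Θ i ω)) P :=
    Integrable.of_bound (by fun_prop) 1 (ae_of_all _ fun ω => by
      simpa using Real.abs_cos_le_one _)
  simp_rw [walkU, norm_sq_sum_exp_I_mul]
  rw [integral_finsetSum _ fun j _ => integrable_finsetSum _ fun k _ => hint j k]
  refine Finset.sum_congr rfl fun j hj => ?_
  rw [integral_finsetSum _ fun k _ => hint j k]
  exact Finset.sum_congr rfl fun k hk =>
    integral_cos_sum_range_sub hΘ hmeas hc (hs j hj) (hs k hk)

theorem integral_norm_sq_sum_walkU_le (hΘ : iIndepFun Θ P) (hmeas : ∀ i, Measurable (Θ i))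
    (hc : ∀ i, 1 ≤ i → ∫ ω, Complex.exp (Complex.I * Θ i ω) ∂P = c) (hc₀ : 0 ≤ c) (hc₁ : c < 1)
    {s : Finset ℕ} (hs : ∀ j ∈ s, 1 ≤ j) :
    ∫ ω, ‖∑ j ∈ s, walkU Θ j ω‖ ^ 2 ∂P ≤ 2 * #s / (1 - c) := by
  rw [integral_norm_sq_sum_walkU hΘ hmeas hc hs]
  calc _ ≤ ∑ _j ∈ s, 2 * (1 - c)⁻¹ := Finset.sum_le_sum fun j _ => sum_pow_dist_le hc₀ hc₁ j s
    _ = _ := by rw [Finset.sum_const, nsmul_eq_mul]; ring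

theorem integral_norm_sq_interpX_div_le (hΘ : iIndepFun Θ P) (hmeas : ∀ i, Measurable (Θ i))
    (hc : ∀ i, 1 ≤ i → ∫ ω, Complex.exp (Complex.I * Θ i ω) ∂P = c) (hc₀ : 0 ≤ c) (hc₁ : c < 1)
    {n : ℕ} (hn : 1 ≤ n) {t : ℝ} (ht : t ∈ Icc (0 : ℝ) 1) :
    ∫ ω, ‖(1 / (n : ℂ)) * interpX Θ n t ω‖ ^ 2 ∂P ≤ 6 / (n * (1 - c)) := by
  have := hΘ.isProbabilityMeasure
  set m := ⌊(n : ℝ) * t⌋₊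
  set A := fun ω => ∑ j ∈ Icc 1 m, walkU Θ j ω
  have hn' : (1 : ℝ) ≤ n := by exact_mod_cast hn
  have hm : (m : ℝ) ≤ n :=
    (Nat.floor_le (mul_nonneg n.cast_nonneg ht.1)).trans (by nlinarith [ht.2])
  have hA : ∫ ω, ‖A ω‖ ^ 2 ∂P ≤ 2 * m / (1 - c) := by
    simpa using integral_norm_sq_sum_walkU_le hΘ hmeas hc hc₀ hc₁ (s := Icc 1 m)
      fun j hj => (Finset.mem_Icc.1 hj).1
  have hAint : Integrable (fun ω => ‖A ω‖ ^ 2) P := by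
    refine Integrable.of_bound ((Finset.measurable_sum _ fun j _ =>
      measurable_walkU hmeas j).norm.pow_const 2).aestronglyMeasurable ((m : ℝ) ^ 2)
      (ae_of_all _ fun ω => ?_)
    have hAω : ‖A ω‖ ≤ m := by
      simpa using norm_sum_le_of_le (Icc 1 m) fun j _ => (norm_walkU Θ j ω).le
    rw [Real.norm_of_nonneg (by positivity)]
    gcongr
  have hpt (ω : Ω) : ‖(1 / (n : ℂ)) * interpX Θ n t ω‖ ^ 2 ≤ (2 * ‖A ω‖ ^ 2 + 2) / n ^ 2 := by
    have : ‖interpX Θ n t ω‖ ≤ ‖A ω‖ + 1 := norm_interpX_le Θ n ht.1 ω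
    rw [norm_mul, mul_pow, norm_div, norm_one, Complex.norm_natCast, div_pow, one_pow, one_div,
      inv_mul_eq_div]
    gcongr
    nlinarith [pow_le_pow_left₀ (norm_nonneg _) this 2, sq_nonneg (‖A ω‖ - 1)]
  calc _ ≤ ∫ ω, (2 * ‖A ω‖ ^ 2 + 2) / n ^ 2 ∂P :=
        integral_mono_of_nonneg (ae_of_all _ fun ω => by positivity)
          (((hAint.const_mul 2).add (integrable_const 2)).div_const _) (ae_of_all _ hpt)
    _ = (2 * ∫ ω, ‖A ω‖ ^ 2 ∂P + 2) / n ^ 2 := by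
        rw [integral_div, integral_add (hAint.const_mul 2) (integrable_const 2),
          integral_const_mul, integral_const, probReal_univ, one_smul]
    _ ≤ (2 * (2 * n / (1 - c)) + 2 * (n / (1 - c))) / n ^ 2 := by
        have h1c : 0 < 1 - c := by linarith
        have : (1 : ℝ) ≤ n / (1 - c) := by rw [le_div_iff₀ h1c]; nlinarith
        gcongr
        · exact hA.trans (by gcongr)
        · linarith
    _ = 6 / (n * (1 - c)) := by field_simp; ring

end Walk

theorem stmt_12_general {Ω : Type*} [MeasureSpace Ω] (P : Measure Ω)
    (α : ℕ → ℝ) (hα : ∀ n, 0 < α n ∧ α n ≤ Real.pi)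
    (hfast : Tendsto (fun n : ℕ => (n : ℝ) * α n ^ 2) atTop atTop)
    (Θ : ℕ → ℕ → Ω → ℝ) (hmeas : ∀ n i, Measurable (Θ n i))
    (hindep : ∀ n, iIndepFun (Θ n) P)
    (hunif : ∀ n, ∀ i ≥ 1, Measure.map (Θ n i) P = unifOn (Icc (-(α n)) (α n)))
    (t : ℝ) (ht : t ∈ Set.Icc (0 : ℝ) 1) :
    Tendsto (fun n : ℕ => ∫ ω, ‖(1 / (n : ℂ)) * interpX (Θ n) n t ω‖ ^ 2 ∂P)
      atTop (nhds 0) := by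
  set c : ℕ → ℝ := fun n => Real.sin (α n) / α n
  have hc₀ (n : ℕ) : 0 ≤ c n :=
    div_nonneg (Real.sin_nonneg_of_nonneg_of_le_pi (hα n).1.le (hα n).2) (hα n).1.le
  have hc₁ (n : ℕ) : c n < 1 := (div_lt_one (hα n).1).2 (Real.sin_lt (hα n).1)
  have hchar (n i : ℕ) (hi : 1 ≤ i) : ∫ ω, Complex.exp (Complex.I * Θ n i ω) ∂P = c n := by
    rw [← integral_map (f := fun x : ℝ => Complex.exp (Complex.I * x)) (hmeas n i).aemeasurable
      (by fun_prop), hunif n i hi, integral_exp_I_mul_unifOn_Icc (hα n).1]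
  refine squeeze_zero' (Eventually.of_forall fun n => integral_nonneg fun ω => sq_nonneg _)
    ((eventually_ge_atTop 1).mono fun n hn => integral_norm_sq_interpX_div_le (hindep n)
      (hmeas n) (hchar n) (hc₀ n) (hc₁ n) hn ht) ?_
  exact tendsto_const_nhds.div_atTop (tendsto_mul_one_sub_sin_div_self_atTop hα hfast)

/-- Triangular array of circle walks with angles uniform on `[-α_n, α_n]`, where
`α_n → 0` and `n·α_n² → ∞`: for each fixed `t ∈ [0,1]`, `E[‖(1/n)X^n_t‖²] → 0`. -/
theorem stmt_12 {Ω : Type*} [MeasureSpace Ω] (P : Measure Ω) [IsProbabilityMeasure P]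
    (α : ℕ → ℝ) (hα : ∀ n, 0 < α n ∧ α n ≤ Real.pi)
    (hα0 : Tendsto α atTop (nhds 0))
    (hfast : Tendsto (fun n : ℕ => (n : ℝ) * α n ^ 2) atTop atTop)
    (Θ : ℕ → ℕ → Ω → ℝ) (hmeas : ∀ n i, Measurable (Θ n i))
    (hindep : ∀ n, iIndepFun (Θ n) P)
    (h0 : ∀ n, Measure.map (Θ n 0) P = unifOn (Ico 0 (2 * Real.pi)))
    (hunif : ∀ n, ∀ i ≥ 1, Measure.map (Θ n i) P = unifOn (Icc (-(α n)) (α n)))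
    (t : ℝ) (ht : t ∈ Set.Icc (0 : ℝ) 1) :
    Tendsto (fun n : ℕ => ∫ ω, ‖(1 / (n : ℂ)) * interpX (Θ n) n t ω‖ ^ 2 ∂P)
      atTop (nhds 0) :=
  stmt_12_general P α hα hfast Θ hmeas hindep hunif t ht
end
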